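/- Effective Spectral Gap Lemma: Let Π_A and Π_B be orthogonal projectors on a finite-dimensional Hilbert space and U = (2Π_A − I)(2Π_B − I). Fix ε ∈ [0, π) and let Λ_ε be the orthogonal projector onto the span of all eigenvectors of U with eigenvalue e^{iθ}, |θ| ≤ ε. Then for every vector |φ⟩ with Π_B|φ⟩ = |φ⟩, we have ‖Λ_ε(I − Π_A)|φ⟩‖ ≤ (ε/2)‖|φ⟩‖. -/

import Mathlib

/-!
`U` is the product of the reflections in `A` and `B`, hence a unitary, so its eigenspaces for
distinct eigenvalues are orthogonal, and `S` is a sum of such eigenspaces that `U` maps onto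
itself; consequently `Λ_ε` commutes with `U`. On `S` the map `1 - U` has norm at most `ε`, since
`|1 - e^{iθ}| ≤ |θ|`. Finally, `Π_B φ = φ` gives `φ - U φ = 2 (1 - Π_A) φ`, so
`2 ‖Λ_ε (1 - Π_A) φ‖ = ‖(1 - U) Λ_ε φ‖ ≤ ε ‖Λ_ε φ‖ ≤ ε ‖φ‖`.
-/

open Module End
open scoped InnerProductSpace ComplexConjugate

theorem Module.End.map_eigenspace_of_ne_zero {K V : Type*} [Field K] [AddCommGroup V]
    [Module K V] (f : End K V) {μ : K} (hμ : μ ≠ 0) : (eigenspace f μ).map f = eigenspace f μ := by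
  ext x
  constructor
  · rintro ⟨y, hy, rfl⟩
    rw [SetLike.mem_coe, mem_eigenspace_iff] at hy
    rw [mem_eigenspace_iff, hy, map_smul, hy]
  · intro hx
    refine ⟨μ⁻¹ • x, Submodule.smul_mem _ _ hx, ?_⟩
    rw [map_smul, mem_eigenspace_iff.mp hx, smul_smul, inv_mul_cancel₀ hμ, one_smul]

section

variable {𝕜 E : Type*} [RCLike 𝕜] [NormedAddCommGroup E] [InnerProductSpace 𝕜 E]

theorem LinearIsometry.orthogonalFamily_eigenspaces (W : E →ₗᵢ[𝕜] E) :
    OrthogonalFamily 𝕜 (fun μ => eigenspace W.toLinearMap μ)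
      fun μ => (eigenspace W.toLinearMap μ).subtypeₗᵢ := by
  rintro μ ν hμν ⟨v, hv⟩ ⟨w, hw⟩
  rw [mem_eigenspace_iff, LinearIsometry.coe_toLinearMap] at hv hw
  by_cases hv0 : v = 0
  · simp [hv0]
  have hnorm : ‖μ‖ = 1 := by
    have := W.norm_map v
    rw [hv, norm_smul] at this
    exact (mul_eq_right₀ (norm_ne_zero_iff.mpr hv0)).mp this
  have hinner : conj μ * ν * ⟪v, w⟫_𝕜 = ⟪v, w⟫_𝕜 := by
    have := W.inner_map_map v w
    rwa [hv, hw, inner_smul_left, inner_smul_right, ← mul_assoc] at this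
  have hne : conj μ * ν ≠ 1 := by
    intro h
    apply hμν
    have : μ * (conj μ * ν) = μ := by rw [h, mul_one]
    rwa [← mul_assoc, RCLike.mul_conj, hnorm, RCLike.ofReal_one, one_pow, one_mul, eq_comm] at this
  show ⟪v, w⟫_𝕜 = 0
  by_contra h
  exact hne ((mul_eq_right₀ h).mp hinner)

theorem norm_apply_sub_smul_le_of_mem_iSup_eigenspace {T : E →ₗ[𝕜] E}
    (hT : OrthogonalFamily 𝕜 (fun μ => eigenspace T μ) fun μ => (eigenspace T μ).subtypeₗᵢ)
    {ι : Type*} {μ : ι → 𝕜} {c : 𝕜} {C : ℝ} (hC : 0 ≤ C) (hμ : ∀ i, ‖μ i - c‖ ≤ C) {x : E}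
    (hx : x ∈ ⨆ i, eigenspace T (μ i)) : ‖T x - c • x‖ ≤ C * ‖x‖ := by
  rw [← iSup_range' (eigenspace T) μ, Submodule.mem_iSup_iff_exists_finsupp] at hx
  obtain ⟨f, hf, rfl⟩ := hx
  have hfam := hT.comp Subtype.val_injective (f := fun ν : Set.range μ => (ν : 𝕜))
  let l : ∀ ν : Set.range μ, eigenspace T ν := fun ν => ⟨f ν, hf ν⟩
  have hsum : (f.sum fun _ y => y) = ∑ ν ∈ f.support, (eigenspace T ν).subtypeₗᵢ (l ν) := rfl
  have happ : T (f.sum fun _ y => y) - c • (f.sum fun _ y => y) =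
      ∑ ν ∈ f.support, (eigenspace T ν).subtypeₗᵢ (((ν : 𝕜) - c) • l ν) := by
    simp only [hsum, map_sum, Finset.smul_sum, ← Finset.sum_sub_distrib, map_smul]
    refine Finset.sum_congr rfl fun ν _ => ?_
    simp [l, sub_smul, mem_eigenspace_iff.mp (hf ν)]
  have hμν : ∀ ν : Set.range μ, ‖(ν : 𝕜) - c‖ ≤ C := by
    rintro ⟨_, i, rfl⟩
    exact hμ i
  rw [← sq_le_sq₀ (norm_nonneg _) (by positivity), happ, hsum, hfam.norm_sum, mul_pow,
    hfam.norm_sum, Finset.mul_sum]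
  gcongr with ν
  rw [norm_smul, mul_pow]
  gcongr
  exact hμν ν

theorem Submodule.starProjection_apply_of_map_eq_self (W : E ≃ₗᵢ[𝕜] E) {S : Submodule 𝕜 E}
    [S.HasOrthogonalProjection] (hS : S.map (W.toLinearEquiv : E →ₗ[𝕜] E) = S) (x : E) :
    S.starProjection (W x) = W (S.starProjection x) := by
  have hW : ∀ y ∈ S, W y ∈ S := fun y hy => hS ▸ Submodule.mem_map_of_mem hy
  refine S.eq_starProjection_of_mem_of_inner_eq_zero (hW _ (S.starProjection_apply_mem x))
    fun s hs => ?_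
  rw [← hS] at hs
  obtain ⟨s, hs, rfl⟩ := hs
  rw [← map_sub]
  exact (W.inner_map_map _ _).trans (S.starProjection_inner_eq_zero x s hs)

end

theorem effective_spectral_gap_general
    {E : Type*} [NormedAddCommGroup E] [InnerProductSpace ℂ E] [FiniteDimensional ℂ E]
    (A B : Submodule ℂ E)
    (PA PB : E →L[ℂ] E)
    (hPA : PA = A.subtypeL.comp A.orthogonalProjectionOnto)
    (hPB : PB = B.subtypeL.comp B.orthogonalProjectionOnto)
    (U : E →L[ℂ] E)
    (hU : U = ((2 : ℂ) • PA - 1) * ((2 : ℂ) • PB - 1))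
    (ε : ℝ) (hε0 : 0 ≤ ε)
    (S : Submodule ℂ E)
    (hS : S = ⨆ θ : {θ : ℝ // |θ| ≤ ε},
      Module.End.eigenspace (U : E →ₗ[ℂ] E) (Complex.exp ((θ : ℝ) * Complex.I)))
    (φ : E) (hφ : PB φ = φ) :
    ‖S.orthogonalProjectionOnto ((1 - PA) φ)‖ ≤ (ε / 2) * ‖φ‖ := by
  set W : E ≃ₗᵢ[ℂ] E := B.reflection.trans A.reflection
  replace hPA : PA = A.starProjection := hPA
  replace hPB : PB = B.starProjection := hPB
  have hUW : (U : E →ₗ[ℂ] E) = W.toLinearIsometry.toLinearMap := by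
    ext x
    simp [hU, hPA, hPB, W, Submodule.reflection_apply, two_smul]
  rw [hUW] at hS
  have hWS : S.map (W.toLinearEquiv : E →ₗ[ℂ] E) = S := by
    rw [hS, Submodule.map_iSup]
    exact iSup_congr fun θ => map_eigenspace_of_ne_zero _ (Complex.exp_ne_zero _)
  have hgap : ∀ x ∈ S, ‖W x - x‖ ≤ ε * ‖x‖ := fun x hx => by
    simpa using norm_apply_sub_smul_le_of_mem_iSup_eigenspace
      W.toLinearIsometry.orthogonalFamily_eigenspaces (c := 1) hε0
      (fun θ => by simpa [mul_comm] using Real.norm_exp_I_mul_ofReal_sub_one_le.trans θ.2)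
      (hS ▸ hx)
  have hφW : W φ - φ = (2 : ℂ) • -(1 - PA) φ := by
    have hφB : φ ∈ B := B.starProjection_eq_self_iff.mp (hPB ▸ hφ)
    change A.reflection (B.reflection φ) - φ = _
    rw [B.reflection_mem_subspace_eq_self hφB, A.reflection_apply, hPA]
    simp only [sub_apply, one_apply_eq_self]
    module
  have hproj : S.starProjection (W φ - φ) = W (S.starProjection φ) - S.starProjection φ := by
    rw [map_sub, Submodule.starProjection_apply_of_map_eq_self W hWS]
  calc ‖S.orthogonalProjectionOnto ((1 - PA) φ)‖
      = ‖S.starProjection (W φ - φ)‖ / 2 := by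
        rw [hφW, map_smul, map_neg, norm_smul, norm_neg, Complex.norm_two,
          mul_div_cancel_left₀ _ two_ne_zero]
        rfl
    _ ≤ ε * ‖S.starProjection φ‖ / 2 := by
        rw [hproj]; gcongr; exact hgap _ (S.starProjection_apply_mem φ)
    _ ≤ ε / 2 * ‖φ‖ := by
        rw [mul_div_right_comm]; gcongr; exact S.norm_starProjection_apply_le φ

/-- Effective Spectral Gap Lemma: let `Π_A, Π_B` be the orthogonal
projections onto subspaces `A, B` of a finite-dimensional complex Hilbert space and
`U = (2Π_A − I)(2Π_B − I)`.  Fix `ε ∈ [0, π)` and let `Λ_ε` be the orthogonal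
projection onto the span of all eigenvectors of `U` with eigenvalue `e^{iθ}`,
`|θ| ≤ ε`.  Then for every `φ` with `Π_B φ = φ`,
`‖Λ_ε (I − Π_A) φ‖ ≤ (ε/2) ‖φ‖`. -/
theorem effective_spectral_gap
    {E : Type*} [NormedAddCommGroup E] [InnerProductSpace ℂ E] [FiniteDimensional ℂ E]
    (A B : Submodule ℂ E)
    (PA PB : E →L[ℂ] E)
    (hPA : PA = A.subtypeL.comp A.orthogonalProjectionOnto)
    (hPB : PB = B.subtypeL.comp B.orthogonalProjectionOnto)
    (U : E →L[ℂ] E)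
    (hU : U = ((2 : ℂ) • PA - 1) * ((2 : ℂ) • PB - 1))
    (ε : ℝ) (hε0 : 0 ≤ ε) (hεπ : ε < Real.pi)
    (S : Submodule ℂ E)
    (hS : S = ⨆ θ : {θ : ℝ // |θ| ≤ ε},
      Module.End.eigenspace (U : E →ₗ[ℂ] E) (Complex.exp ((θ : ℝ) * Complex.I)))
    (φ : E) (hφ : PB φ = φ) :
    ‖S.orthogonalProjectionOnto ((1 - PA) φ)‖ ≤ (ε / 2) * ‖φ‖ :=
  effective_spectral_gap_general A B PA PB hPA hPB U hU ε hε0 S hS φ hφ
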